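/- arXiv:math/0206149 — 7 statements merged into one kernel-verified Lean document; each statement's English description precedes it below -/
import Mathlib

section
/- Assume π is surjective. Then there is a continuous map Φ̃ : Ψ⁻¹(0) → 𝔡* such that |z_j|² = ⟨Φ̃(z), X_j⟩ − λ_j for every z ∈ Ψ⁻¹(0) and every j = 1, …, d; moreover Φ̃ is invariant under the coordinatewise circle action, i.e. Φ̃(t·z) = Φ̃(z) for every t ∈ T^d and z ∈ Ψ⁻¹(0). -/
/-- The zero level set `Ψ⁻¹(0) = { z ∈ ℂ^d : Σ_j (|z_j|² + λ_j) v_j = 0 for all v ∈ 𝔫 = ker π }`. -/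
def ZeroLevel {𝔡 : Type*} [AddCommGroup 𝔡] [Module ℝ 𝔡] {d : ℕ}
    (lam : Fin d → ℝ) (π : (Fin d → ℝ) →ₗ[ℝ] 𝔡) : Set (Fin d → ℂ) :=
  {z | ∀ v ∈ LinearMap.ker π, ∑ j, (‖z j‖ ^ 2 + lam j) * v j = 0}

/-- Assume `π` is surjective.  Then there is a continuous map
`Φ̃ : Ψ⁻¹(0) → 𝔡*` with `|z_j|² = ⟨Φ̃(z), X_j⟩ − λ_j` for all `z ∈ Ψ⁻¹(0)` and all `j`,
and `Φ̃` is invariant under the coordinatewise circle action of `T^d = ℝ^d/ℤ^d`.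
(Since the action factors through `ℝ^d → ℝ^d/ℤ^d`, invariance is stated for all `t ∈ ℝ^d`;
in finite dimensions the topological dual `𝔡 →L[ℝ] ℝ` is the dual space `𝔡*`.) -/
theorem exists_continuous_invariant_moment_map
    {𝔡 : Type*} [NormedAddCommGroup 𝔡] [NormedSpace ℝ 𝔡] [FiniteDimensional ℝ 𝔡]
    {d : ℕ} (X : Fin d → 𝔡) (lam : Fin d → ℝ)
    (π : (Fin d → ℝ) →ₗ[ℝ] 𝔡) (hπ : ∀ j, π (Pi.single j 1) = X j)
    (hsurj : Function.Surjective π) :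
    ∃ Φ : ZeroLevel lam π → (𝔡 →L[ℝ] ℝ),
      Continuous Φ ∧
      (∀ z : ZeroLevel lam π, ∀ j, ‖(z : Fin d → ℂ) j‖ ^ 2 = Φ z (X j) - lam j) ∧
      (∀ (t : Fin d → ℝ) (z w : ZeroLevel lam π),
        (∀ j, (w : Fin d → ℂ) j =
            Complex.exp (2 * Real.pi * Complex.I * (t j : ℂ)) * (z : Fin d → ℂ) j) →
        Φ w = Φ z) := by
  obtain ⟨s, hs⟩ := π.exists_rightInverse_of_surjective (LinearMap.range_eq_top.mpr hsurj)
  set c : Fin d → (𝔡 →L[ℝ] ℝ) :=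
    fun j => LinearMap.toContinuousLinearMap ((LinearMap.proj j).comp s) with hc
  refine ⟨fun z => ∑ j, (‖(z : Fin d → ℂ) j‖ ^ 2 + lam j) • c j, ?_, ?_, ?_⟩
  · apply continuous_finset_sum
    intro j _
    exact (((continuous_apply j).comp continuous_subtype_val).norm.pow 2).add
      continuous_const |>.smul continuous_const
  · intro z j
    have hker : s (X j) - Pi.single j 1 ∈ LinearMap.ker π := by
      rw [LinearMap.mem_ker, map_sub, hπ j]
      have : π (s (X j)) = X j := by simpa using LinearMap.congr_fun hs (X j)
      rw [this, sub_self]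
    have h0 := z.2 _ hker
    have hsum : ∑ i, (‖(z : Fin d → ℂ) i‖ ^ 2 + lam i) * (s (X j)) i
        = ∑ i, (‖(z : Fin d → ℂ) i‖ ^ 2 + lam i) * (Pi.single j 1 : Fin d → ℝ) i := by
      have := sub_eq_zero.mpr (rfl : (0:ℝ) = 0)
      have : ∑ i, ((‖(z : Fin d → ℂ) i‖ ^ 2 + lam i) * (s (X j)) i
          - (‖(z : Fin d → ℂ) i‖ ^ 2 + lam i) * (Pi.single j 1 : Fin d → ℝ) i) = 0 := by
        simpa [Pi.sub_apply, mul_sub] using h0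
      rw [Finset.sum_sub_distrib] at this
      linarith [this]
    have hsingle : ∑ i, (‖(z : Fin d → ℂ) i‖ ^ 2 + lam i) * (Pi.single j 1 : Fin d → ℝ) i
        = ‖(z : Fin d → ℂ) j‖ ^ 2 + lam j := by
      rw [Finset.sum_eq_single j]
      · simp
      · intro i _ hij; simp [Pi.single_apply, hij]
      · simp
    simp only [ContinuousLinearMap.coe_sum', Finset.sum_apply, ContinuousLinearMap.coe_smul',
      Pi.smul_apply, smul_eq_mul, hc, LinearMap.coe_toContinuousLinearMap',
      LinearMap.comp_apply, LinearMap.proj_apply]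
    rw [hsum, hsingle]
    ring
  · intro t z w hw
    have hnorm : ∀ j, ‖(w : Fin d → ℂ) j‖ = ‖(z : Fin d → ℂ) j‖ := by
      intro j
      rw [hw j, norm_mul, Complex.norm_exp]
      norm_num [Complex.mul_re, Complex.mul_im]
    simp only [hnorm]
end

section
/- Assume π is surjective and that Δ is a bounded subset of 𝔡*. Then the level set Ψ⁻¹(0) is a compact subset of ℂ^d. -/
/-!
A point `z` of the zero level has moment vector `c = (|z_j|² + λ_j)_j` annihilating `ker π`,
so `c = μ ∘ π` for some `μ ∈ 𝔡*` (the range of `π*` is the annihilator of `ker π`). Then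
`μ(X_j) = |z_j|² + λ_j ≥ λ_j`, i.e. `μ ∈ Δ`, so `‖μ‖ ≤ C` by boundedness of `Δ`, and
`|z_j|² ≤ C ‖X_j‖ - λ_j`. The level set is thus bounded, and it is closed as an intersection of
zero sets of continuous functions.
-/

open Bornology

section

variable {ι 𝔡 : Type*} [Fintype ι] [NormedAddCommGroup 𝔡] [NormedSpace ℝ 𝔡]

/-- `Ψ⁻¹(0)`, written through `ker π` rather than the restriction map to `𝔫*`. -/
def zeroLevel (π : (ι → ℝ) →ₗ[ℝ] 𝔡) (lam : ι → ℝ) : Set (ι → ℂ) :=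
  {z | ∀ v ∈ LinearMap.ker π, ∑ j, (‖z j‖ ^ 2 + lam j) * v j = 0}

theorem isClosed_zeroLevel (π : (ι → ℝ) →ₗ[ℝ] 𝔡) (lam : ι → ℝ) :
    IsClosed (zeroLevel π lam) := by
  simp only [zeroLevel, Set.ofPred_forall]
  exact isClosed_biInter fun v _ ↦ isClosed_eq (by fun_prop) continuous_const

theorem exists_dual_apply_single_eq [DecidableEq ι] [FiniteDimensional ℝ 𝔡]
    (π : (ι → ℝ) →ₗ[ℝ] 𝔡)
    {c : ι → ℝ} (hc : ∀ v ∈ LinearMap.ker π, ∑ j, c j * v j = 0) :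
    ∃ μ : 𝔡 →L[ℝ] ℝ, ∀ j, μ (π (Pi.single j 1)) = c j := by
  let φ : Module.Dual ℝ (ι → ℝ) := Fintype.linearCombination ℝ c
  have hφ : φ ∈ LinearMap.range π.dualMap := by
    rw [LinearMap.range_dualMap_eq_dualAnnihilator_ker, Submodule.mem_dualAnnihilator]
    intro v hv
    simpa [φ, Fintype.linearCombination_apply, mul_comm] using hc v hv
  obtain ⟨μ, hμ⟩ := hφ
  refine ⟨LinearMap.toContinuousLinearMap μ, fun j ↦ ?_⟩
  simpa [φ] using LinearMap.congr_fun hμ (Pi.single j 1)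

theorem norm_sq_le_of_mem_zeroLevel [DecidableEq ι] [FiniteDimensional ℝ 𝔡]
    {π : (ι → ℝ) →ₗ[ℝ] 𝔡}
    {lam : ι → ℝ} {C : ℝ}
    (hC : ∀ μ ∈ {μ : 𝔡 →L[ℝ] ℝ | ∀ j, lam j ≤ μ (π (Pi.single j 1))}, ‖μ‖ ≤ C)
    {z : ι → ℂ} (hz : z ∈ zeroLevel π lam) (j : ι) :
    ‖z j‖ ^ 2 ≤ C * ‖π (Pi.single j 1)‖ - lam j := by
  obtain ⟨μ, hμ⟩ := exists_dual_apply_single_eq π hz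
  have hμC : ‖μ‖ ≤ C := hC μ fun i ↦ by
    rw [hμ i]
    exact le_add_of_nonneg_left (sq_nonneg _)
  calc ‖z j‖ ^ 2 = μ (π (Pi.single j 1)) - lam j := by rw [hμ j]; ring
    _ ≤ ‖μ‖ * ‖π (Pi.single j 1)‖ - lam j := by
      gcongr
      exact (le_abs_self _).trans (μ.le_opNorm _)
    _ ≤ C * ‖π (Pi.single j 1)‖ - lam j := by gcongr

end

theorem zero_level_isCompact_general
    {𝔡 : Type*} [NormedAddCommGroup 𝔡] [NormedSpace ℝ 𝔡] [FiniteDimensional ℝ 𝔡]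
    {d : ℕ} (X : Fin d → 𝔡) (lam : Fin d → ℝ)
    (π : (Fin d → ℝ) →ₗ[ℝ] 𝔡) (hπ : ∀ j, π (Pi.single j 1) = X j)
    (hbd : Bornology.IsBounded {μ : 𝔡 →L[ℝ] ℝ | ∀ j, lam j ≤ μ (X j)}) :
    IsCompact {z : Fin d → ℂ | ∀ v ∈ LinearMap.ker π,
      ∑ j, (‖z j‖ ^ 2 + lam j) * v j = 0} := by
  obtain ⟨C, hC⟩ := isBounded_iff_forall_norm_le.1 hbd
  simp only [← hπ] at hC
  refine Metric.isCompact_of_isClosed_isBounded (isClosed_zeroLevel π lam) ?_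
  refine forall_isBounded_image_eval_iff.1 fun j ↦
    (Metric.isBounded_closedBall (x := 0) (r := √(C * ‖X j‖ - lam j))).subset ?_
  rintro _ ⟨z, hz, rfl⟩
  rw [mem_closedBall_zero_iff, ← abs_norm, ← hπ]
  exact Real.abs_le_sqrt (norm_sq_le_of_mem_zeroLevel hC hz j)

/-- Assume `π` is surjective and `Δ` is a bounded subset of `𝔡*`.
Then the level set `Ψ⁻¹(0)` is a compact subset of `ℂ^d`.
(In finite dimensions the dual `𝔡*` is realized as `𝔡 →L[ℝ] ℝ`.) -/
theorem zero_level_isCompact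
    {𝔡 : Type*} [NormedAddCommGroup 𝔡] [NormedSpace ℝ 𝔡] [FiniteDimensional ℝ 𝔡]
    {d : ℕ} (X : Fin d → 𝔡) (lam : Fin d → ℝ)
    (π : (Fin d → ℝ) →ₗ[ℝ] 𝔡) (hπ : ∀ j, π (Pi.single j 1) = X j)
    (hsurj : Function.Surjective π)
    (hbd : Bornology.IsBounded {μ : 𝔡 →L[ℝ] ℝ | ∀ j, lam j ≤ μ (X j)}) :
    IsCompact {z : Fin d → ℂ | ∀ v ∈ LinearMap.ker π,
      ∑ j, (‖z j‖ ^ 2 + lam j) * v j = 0} :=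
  zero_level_isCompact_general X lam π hπ hbd
end

section
/- If the open face F_I of Δ is nonempty, then Ψ⁻¹(0) ∩ ℂ^d_{F_I} is nonempty; that is, there exists z ∈ ℂ^d with Σ_{j=1}^d (|z_j|² + λ_j) v_j = 0 for every v ∈ 𝔫 and with z_j = 0 exactly for j ∈ I. -/
/-! Pick `μ ∈ F_I` and put `z_j = √(⟨μ, X_j⟩ - λ_j)`. Then `z_j = 0` exactly when
`⟨μ, X_j⟩ = λ_j`, i.e. for `j ∈ I`, and `|z_j|² + λ_j = ⟨μ, X_j⟩`, so for `v ∈ ker π`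
the sum `Σ_j (|z_j|² + λ_j) v_j = ⟨μ, π v⟩` vanishes. -/

open Module

theorem Module.Dual.sum_apply_single_mul_eq_zero_of_mem_ker {ι R M : Type*} [Fintype ι]
    [DecidableEq ι] [CommRing R] [AddCommGroup M] [Module R M] (π : (ι → R) →ₗ[R] M)
    (μ : Dual R M) {v : ι → R} (hv : v ∈ LinearMap.ker π) :
    ∑ j, μ (π (Pi.single j 1)) * v j = 0 := by
  have hsum : v = ∑ j, v j • Pi.single j (1 : R) := by
    simp only [← Pi.single_smul, smul_eq_mul, mul_one, Finset.univ_sum_single]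
  calc ∑ j, μ (π (Pi.single j 1)) * v j = μ (π v) := by
        conv_rhs => rw [hsum]
        simp only [map_sum, map_smul, smul_eq_mul, mul_comm]
    _ = 0 := by rw [LinearMap.mem_ker.mp hv, map_zero]

theorem Complex.exists_norm_sq_add_eq_and_eq_zero_iff {ι : Type*} {a b : ι → ℝ} (hab : a ≤ b) :
    ∃ z : ι → ℂ, (∀ j, ‖z j‖ ^ 2 + a j = b j) ∧ ∀ j, z j = 0 ↔ b j = a j := by
  refine ⟨fun j => (√(b j - a j) : ℂ), fun j => ?_, fun j => ?_⟩
  · rw [Complex.norm_real, Real.norm_eq_abs, sq_abs, Real.sq_sqrt (sub_nonneg.mpr (hab j))]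
    ring
  · rw [Complex.ofReal_eq_zero, Real.sqrt_eq_zero (sub_nonneg.mpr (hab j)), sub_eq_zero]

theorem zero_level_inter_face_stratum_nonempty_general
    {𝔡 : Type*} [AddCommGroup 𝔡] [Module ℝ 𝔡]
    {d : ℕ} (X : Fin d → 𝔡) (lam : Fin d → ℝ)
    (π : (Fin d → ℝ) →ₗ[ℝ] 𝔡) (hπ : ∀ j, π (Pi.single j 1) = X j)
    (I : Set (Fin d))
    (hne : ∃ μ : Module.Dual ℝ 𝔡, (∀ j, lam j ≤ μ (X j)) ∧ ∀ j, μ (X j) = lam j ↔ j ∈ I) :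
    ∃ z : Fin d → ℂ,
      (∀ v ∈ LinearMap.ker π, ∑ j, (‖z j‖ ^ 2 + lam j) * v j = 0) ∧
      ∀ j, z j = 0 ↔ j ∈ I := by
  obtain ⟨μ, hle, hface⟩ := hne
  obtain ⟨z, hnorm, hzero⟩ :=
    Complex.exists_norm_sq_add_eq_and_eq_zero_iff (b := fun j => μ (X j)) hle
  refine ⟨z, fun v hv => ?_, fun j => (hzero j).trans (hface j)⟩
  simpa only [hnorm, hπ] using μ.sum_apply_single_mul_eq_zero_of_mem_ker π hv

/-- If the open face `F_I` of `Δ` is nonempty, then `Ψ⁻¹(0) ∩ ℂ^d_{F_I}` is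
nonempty: there is `z ∈ ℂ^d` with `Σ_j (|z_j|² + λ_j) v_j = 0` for all `v ∈ 𝔫 = ker π`
and with `z_j = 0` exactly for `j ∈ I`. -/
theorem zero_level_inter_face_stratum_nonempty
    {𝔡 : Type*} [AddCommGroup 𝔡] [Module ℝ 𝔡] [FiniteDimensional ℝ 𝔡]
    {d : ℕ} (X : Fin d → 𝔡) (lam : Fin d → ℝ)
    (π : (Fin d → ℝ) →ₗ[ℝ] 𝔡) (hπ : ∀ j, π (Pi.single j 1) = X j)
    (I : Set (Fin d))
    (hne : ∃ μ : Module.Dual ℝ 𝔡, (∀ j, lam j ≤ μ (X j)) ∧ ∀ j, μ (X j) = lam j ↔ j ∈ I) :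
    ∃ z : Fin d → ℂ,
      (∀ v ∈ LinearMap.ker π, ∑ j, (‖z j‖ ^ 2 + lam j) * v j = 0) ∧
      ∀ j, z j = 0 ↔ j ∈ I :=
  zero_level_inter_face_stratum_nonempty_general X lam π hπ I hne
end

section
/- Assume π is surjective and the open face F_I of Δ is nonempty, of dimension p (the dimension of its affine span), with r = card(I). Then the subspace 𝔫^{F_I} = 𝔫 ∩ span_ℝ{ e_j : j ∈ I } of ℝ^d has dimension r − n + p. -/
/-- The open face `F_I = { μ ∈ Δ : ⟨μ,X_j⟩ = λ_j iff j ∈ I }` of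
`Δ = ⋂_j { μ : ⟨μ,X_j⟩ ≥ λ_j } ⊆ 𝔡*`. -/
def openFace {𝔡 : Type*} [AddCommGroup 𝔡] [Module ℝ 𝔡] {d : ℕ}
    (X : Fin d → 𝔡) (lam : Fin d → ℝ) (I : Finset (Fin d)) : Set (Module.Dual ℝ 𝔡) :=
  {μ | (∀ j, lam j ≤ μ (X j)) ∧ ∀ j, μ (X j) = lam j ↔ j ∈ I}

set_option maxHeartbeats 800000 in
set_option synthInstance.maxHeartbeats 200000 in
/-- Assume `π` is surjective and the open face `F_I` is nonempty, of dimension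
`p` (the dimension of its affine span), with `r = card I`.  Then the subspace
`𝔫^{F_I} = 𝔫 ∩ span_ℝ{ e_j : j ∈ I }` of `ℝ^d` has dimension `r − n + p`. -/
theorem finrank_face_isotropy_algebra
    {𝔡 : Type*} [AddCommGroup 𝔡] [Module ℝ 𝔡] [FiniteDimensional ℝ 𝔡]
    {d : ℕ} (X : Fin d → 𝔡) (lam : Fin d → ℝ)
    (π : (Fin d → ℝ) →ₗ[ℝ] 𝔡) (hπ : ∀ j, π (Pi.single j 1) = X j)
    (hsurj : Function.Surjective π)
    (I : Finset (Fin d)) (hne : (openFace X lam I).Nonempty)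
    (p : ℕ) (hp : p = Module.finrank ℝ (affineSpan ℝ (openFace X lam I)).direction)
    (r : ℕ) (hr : r = I.card) :
    (Module.finrank ℝ
        ↥(LinearMap.ker π ⊓
          Submodule.span ℝ ((fun j => Pi.single j (1 : ℝ)) '' (I : Set (Fin d)))) : ℤ) =
      (r : ℤ) - (Module.finrank ℝ 𝔡 : ℤ) + (p : ℤ) := by
  classical
  obtain ⟨μ₀, hμ₀⟩ := hne
  set F : Set (Module.Dual ℝ 𝔡) := openFace X lam I with hF
  set W : Submodule ℝ 𝔡 := Submodule.span ℝ (X '' (I : Set (Fin d))) with hWdef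
  set S : Submodule ℝ (Fin d → ℝ) :=
    Submodule.span ℝ ((fun j => Pi.single j (1 : ℝ)) '' (I : Set (Fin d))) with hSdef
  -- the direction of the affine span of the face is the dual annihilator of W
  have hdir : (affineSpan ℝ F).direction = W.dualAnnihilator := by
    rw [direction_affineSpan]
    apply le_antisymm
    · rw [vectorSpan_def, Submodule.span_le]
      rintro v ⟨μ, hμ, μ', hμ', rfl⟩
      have hker : W ≤ LinearMap.ker (μ - μ') := by
        rw [hWdef, Submodule.span_le]
        rintro _ ⟨j, hj, rfl⟩
        simp only [SetLike.mem_coe, LinearMap.mem_ker, LinearMap.sub_apply]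
        rw [(hμ.2 j).mpr hj, (hμ'.2 j).mpr hj, sub_self]
      rw [SetLike.mem_coe, Submodule.mem_dualAnnihilator]
      intro w hw
      have h3 := hker hw
      rw [LinearMap.mem_ker] at h3
      simpa [vsub_eq_sub] using h3
    · intro ν hν
      rw [Submodule.mem_dualAnnihilator] at hν
      have hν' : ∀ j ∈ I, ν (X j) = 0 := fun j hj =>
        hν (X j) (Submodule.subset_span ⟨j, hj, rfl⟩)
      have hev : ∀ j : Fin d, ∀ᶠ t : ℝ in nhds 0, j ∉ I → lam j < μ₀ (X j) + t * ν (X j) := by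
        intro j
        by_cases hj : j ∈ I
        · exact Filter.Eventually.of_forall fun t h => absurd hj h
        · have hlt : lam j < μ₀ (X j) :=
            lt_of_le_of_ne (hμ₀.1 j) (fun h => hj ((hμ₀.2 j).mp h.symm))
          have hc : Continuous fun t : ℝ => μ₀ (X j) + t * ν (X j) := by continuity
          have h0 : lam j < μ₀ (X j) + (0 : ℝ) * ν (X j) := by simpa using hlt
          have := (hc.tendsto 0).eventually (eventually_gt_nhds h0)
          exact this.mono fun t ht _ => ht
      have hall : ∀ᶠ t : ℝ in nhds 0, ∀ j, j ∉ I → lam j < μ₀ (X j) + t * ν (X j) :=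
        Filter.eventually_all.mpr hev
      have h2 : ∀ᶠ t : ℝ in nhdsWithin 0 (Set.Ioi 0),
          ∀ j, j ∉ I → lam j < μ₀ (X j) + t * ν (X j) :=
        hall.filter_mono nhdsWithin_le_nhds
      obtain ⟨t, ht1, htpos⟩ := (h2.and self_mem_nhdsWithin).exists
      have htpos' : (0 : ℝ) < t := htpos
      have happ : ∀ j, (μ₀ + t • ν) (X j) = μ₀ (X j) + t * ν (X j) := fun j => rfl
      have hμmem : μ₀ + t • ν ∈ F := by
        constructor
        · intro j
          by_cases hj : j ∈ I
          · rw [happ, hν' j hj, (hμ₀.2 j).mpr hj]; simp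
          · rw [happ]; exact le_of_lt (ht1 j hj)
        · intro j
          constructor
          · intro h
            by_contra hj
            have := ht1 j hj
            rw [← happ, h] at this
            exact lt_irrefl _ this
          · intro hj
            rw [happ, hν' j hj, (hμ₀.2 j).mpr hj]; simp
      have hv : (μ₀ + t • ν) -ᵥ μ₀ ∈ vectorSpan ℝ F := vsub_mem_vectorSpan ℝ hμmem hμ₀
      have heq : (μ₀ + t • ν) -ᵥ μ₀ = t • ν := by
        rw [vsub_eq_sub]; abel
      rw [heq] at hv
      have := Submodule.smul_mem _ t⁻¹ hv
      rwa [smul_smul, inv_mul_cancel₀ (ne_of_gt htpos'), one_smul] at this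
  -- finrank W + p = n
  have hann : Module.finrank ℝ W + Module.finrank ℝ W.dualAnnihilator = Module.finrank ℝ 𝔡 := by
    have h1 := LinearEquiv.finrank_eq (R := ℝ) (M := 𝔡 ⧸ W)
      (N := {x // x ∈ W.dualAnnihilator}) (Subspace.quotEquivAnnihilator W)
    have h2 := Submodule.finrank_quotient_add_finrank W
    omega
  have hWp : Module.finrank ℝ W + p = Module.finrank ℝ 𝔡 := by
    rw [hp, hdir]; exact hann
  -- finrank S = r
  have hS : Module.finrank ℝ S = r := by
    have hli : LinearIndependent ℝ
        (fun j : (I : Set (Fin d)) => (Pi.single (j : Fin d) (1 : ℝ) : Fin d → ℝ)) := by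
      have := (Pi.basisFun ℝ (Fin d)).linearIndependent.comp
        (fun j : (I : Set (Fin d)) => (j : Fin d)) Subtype.val_injective
      simpa only [Function.comp_def, Pi.basisFun_apply] using this
    have hSr : S = Submodule.span ℝ
        (Set.range fun j : (I : Set (Fin d)) => (Pi.single (j : Fin d) (1 : ℝ) : Fin d → ℝ)) := by
      rw [hSdef, Set.image_eq_range]
    rw [hSr, finrank_span_eq_card hli, hr]
    simp
  -- rank-nullity for π restricted to S
  have hmap : Submodule.map π S = W := by
    rw [hSdef, hWdef, Submodule.map_span, Set.image_image]
    simp only [hπ]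
  have hrn : Module.finrank ℝ ↥(LinearMap.ker π ⊓ S) + Module.finrank ℝ W = r := by
    have h1 := LinearMap.finrank_range_add_finrank_ker (π.domRestrict S)
    rw [LinearMap.range_domRestrict, hmap, LinearMap.ker_domRestrict] at h1
    have hc : Submodule.comap S.subtype (LinearMap.ker π) =
        Submodule.comap S.subtype (LinearMap.ker π ⊓ S) := by
      rw [Submodule.comap_inf, Submodule.comap_subtype_self, inf_top_eq]
    rw [hc] at h1
    have e : Module.finrank ℝ ↥(Submodule.comap S.subtype (LinearMap.ker π ⊓ S)) =
        Module.finrank ℝ ↥(LinearMap.ker π ⊓ S) :=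
      LinearEquiv.finrank_eq (R := ℝ)
        (M := ↥(Submodule.comap S.subtype (LinearMap.ker π ⊓ S)))
        (N := ↥(LinearMap.ker π ⊓ S)) (Submodule.comapSubtypeEquivOfLe inf_le_right)
    rw [hS] at h1
    omega
  omega
end

section
/- Assume π is surjective and the open face F_I of Δ is nonempty and regular, i.e. card(I) = n − p where p is the dimension of the affine span of F_I. Then 𝔫 ∩ span_ℝ{ e_j : j ∈ I } = {0}; in particular the stabilizer in any subgroup N of T^d of a point z ∈ ℂ^d_{F_I}, namely N ∩ S^{F_I}, has trivial Lie algebra. -/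
open Module


/-- Assume `π` is surjective and the open face `F_I` is nonempty and regular,
i.e. `card I = n − p` where `p` is the dimension of the affine span of `F_I`.  Then
`𝔫 ∩ span_ℝ{ e_j : j ∈ I } = {0}`; i.e. the Lie algebra of the stabilizer `N ∩ S^{F_I}` of a
point of `ℂ^d_{F_I}` in any subgroup `N ⊆ T^d`, namely `𝔫 ∩ 𝔰^{F_I}`, is trivial. -/
theorem regular_face_trivial_isotropy_algebra
    {𝔡 : Type*} [AddCommGroup 𝔡] [Module ℝ 𝔡] [FiniteDimensional ℝ 𝔡]
    {d : ℕ} (X : Fin d → 𝔡) (lam : Fin d → ℝ)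
    (π : (Fin d → ℝ) →ₗ[ℝ] 𝔡) (hπ : ∀ j, π (Pi.single j 1) = X j)
    (hsurj : Function.Surjective π)
    (I : Finset (Fin d)) (hne : (openFace X lam I).Nonempty)
    (hreg : (I.card : ℤ) = (Module.finrank ℝ 𝔡 : ℤ) -
      (Module.finrank ℝ (affineSpan ℝ (openFace X lam I)).direction : ℤ)) :
    LinearMap.ker π ⊓
      Submodule.span ℝ ((fun j => Pi.single j (1 : ℝ)) '' (I : Set (Fin d))) = ⊥ := by
  classical
  obtain ⟨μ₀, hμ₀⟩ := hne
  set F := openFace X lam I with hF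
  set W : Submodule ℝ 𝔡 := Submodule.span ℝ (X '' (I : Set (Fin d))) with hW
  set V := (affineSpan ℝ F).direction with hV
  -- Step 1: dualAnnihilator of W is contained in V
  have hUV : W.dualAnnihilator ≤ V := by
    intro η hη
    have hηX : ∀ j ∈ I, η (X j) = 0 := by
      intro j hj
      exact (Submodule.mem_dualAnnihilator η).1 hη (X j)
        (Submodule.subset_span ⟨j, hj, rfl⟩)
    -- choose a small positive t
    set f : Fin d → ℝ := fun j =>
      if h : η (X j) = 0 then 1 else (μ₀ (X j) - lam j) / (2 * |η (X j)|) with hf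
    have hfpos : ∀ j, 0 < f j := by
      intro j
      by_cases h : η (X j) = 0
      · simp [hf, h]
      · have hjI : j ∉ I := fun hj => h (hηX j hj)
        have h1 : lam j < μ₀ (X j) := lt_of_le_of_ne (hμ₀.1 j) (fun e => hjI ((hμ₀.2 j).1 e.symm))
        have h2 : 0 < |η (X j)| := abs_pos.2 h
        have h3 : 0 < μ₀ (X j) - lam j := by linarith
        simp only [hf, h, dif_neg, not_false_iff]
        exact div_pos h3 (by linarith)
    set t : ℝ := (insert (1:ℝ) (Finset.univ.image f)).min' ⟨1, Finset.mem_insert_self _ _⟩ with ht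
    have htpos : 0 < t := by
      have := Finset.min'_mem (insert (1:ℝ) (Finset.univ.image f)) ⟨1, Finset.mem_insert_self _ _⟩
      rw [← ht] at this
      rcases Finset.mem_insert.1 this with h | h
      · rw [h]; norm_num
      · obtain ⟨j, _, hj⟩ := Finset.mem_image.1 h
        rw [← hj]; exact hfpos j
    have htle : ∀ j, t ≤ f j := fun j =>
      Finset.min'_le _ _ (Finset.mem_insert_of_mem (Finset.mem_image_of_mem f (Finset.mem_univ j)))
    -- μ₀ + t • η ∈ F
    have hmem : μ₀ + t • η ∈ F := by
      constructor
      · intro j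
        by_cases hj : j ∈ I
        · simp [hηX j hj, hμ₀.2 j |>.2 hj]
        · have h1 : lam j < μ₀ (X j) := lt_of_le_of_ne (hμ₀.1 j)
            (fun e => hj ((hμ₀.2 j).1 e.symm))
          by_cases h : η (X j) = 0
          · simp only [LinearMap.add_apply, LinearMap.smul_apply, smul_eq_mul, h, mul_zero,
              add_zero]
            exact le_of_lt h1
          · have habs : t * |η (X j)| < μ₀ (X j) - lam j := by
              have h2 : f j * |η (X j)| = (μ₀ (X j) - lam j) / 2 := by
                have : |η (X j)| ≠ 0 := abs_ne_zero.2 h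
                simp only [hf, h, dif_neg, not_false_iff]
                field_simp [hf, h]
              have h3 : t * |η (X j)| ≤ f j * |η (X j)| :=
                mul_le_mul_of_nonneg_right (htle j) (abs_nonneg _)
              calc t * |η (X j)| ≤ (μ₀ (X j) - lam j) / 2 := h2 ▸ h3
                _ < μ₀ (X j) - lam j := by linarith
            have : -(μ₀ (X j) - lam j) < t * η (X j) := by
              have := neg_abs_le (t * η (X j))
              have habs' : |t * η (X j)| < μ₀ (X j) - lam j := by
                rwa [abs_mul, abs_of_pos htpos]
              nlinarith [neg_abs_le (t * η (X j)), le_abs_self (t * η (X j))]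
            simp only [LinearMap.add_apply, LinearMap.smul_apply, smul_eq_mul]
            linarith
      · intro j
        by_cases hj : j ∈ I
        · simp [hηX j hj, hμ₀.2 j |>.2 hj, hj]
        · simp only [hj, iff_false]
          have h1 : lam j < μ₀ (X j) := lt_of_le_of_ne (hμ₀.1 j)
            (fun e => hj ((hμ₀.2 j).1 e.symm))
          by_cases h : η (X j) = 0
          · simp only [LinearMap.add_apply, LinearMap.smul_apply, smul_eq_mul, h, mul_zero,
              add_zero]
            exact ne_of_gt h1
          · have habs' : |t * η (X j)| < μ₀ (X j) - lam j := by
              rw [abs_mul, abs_of_pos htpos]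
              have h2 : f j * |η (X j)| = (μ₀ (X j) - lam j) / 2 := by
                have : |η (X j)| ≠ 0 := abs_ne_zero.2 h
                simp only [hf, h, dif_neg, not_false_iff]
                field_simp [hf, h]
              have h3 : t * |η (X j)| ≤ f j * |η (X j)| :=
                mul_le_mul_of_nonneg_right (htle j) (abs_nonneg _)
              calc t * |η (X j)| ≤ (μ₀ (X j) - lam j) / 2 := h2 ▸ h3
                _ < μ₀ (X j) - lam j := by linarith
            simp only [LinearMap.add_apply, LinearMap.smul_apply, smul_eq_mul]
            intro he
            have : t * η (X j) = lam j - μ₀ (X j) := by linarith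
            rw [this] at habs'
            rw [abs_sub_comm] at habs'
            have := le_abs_self (μ₀ (X j) - lam j)
            linarith
    have hsub : (μ₀ + t • η) - μ₀ ∈ V := by
      have h1 : μ₀ + t • η ∈ affineSpan ℝ F := subset_affineSpan ℝ F hmem
      have h2 : μ₀ ∈ affineSpan ℝ F := subset_affineSpan ℝ F hμ₀
      exact AffineSubspace.vsub_mem_direction h1 h2
    have : t • η ∈ V := by simpa using hsub
    have := V.smul_mem t⁻¹ this
    rwa [smul_smul, inv_mul_cancel₀ (ne_of_gt htpos), one_smul] at this
  -- Step 2: finrank W = card I, hence linear independence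
  have hUle : finrank ℝ W.dualAnnihilator ≤ finrank ℝ V := Submodule.finrank_mono hUV
  have hVle : (finrank ℝ V : ℤ) = (finrank ℝ 𝔡 : ℤ) - I.card := by omega
  -- finrank W + finrank W.dualAnnihilator = finrank 𝔡
  have hWann : finrank ℝ W + finrank ℝ W.dualAnnihilator = finrank ℝ 𝔡 := by
    have h1 : finrank ℝ W.dualAnnihilator = finrank ℝ (𝔡 ⧸ W) :=
      ((Subspace.quotEquivAnnihilator W).finrank_eq).symm
    have h2 := Submodule.finrank_quotient_add_finrank W
    omega
  have hWge : (I.card : ℤ) ≤ (finrank ℝ W : ℤ) := by omega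
  have hWle' : finrank ℝ W ≤ (I.image X).card := by
    have : (↑(I.image X) : Set 𝔡) = X '' ↑I := by
      ext x; simp [Finset.mem_image]
    have h := finrank_span_finset_le_card (R := ℝ) (I.image X)
    rw [Set.finrank, this] at h
    exact h
  have hcard : (I.image X).card ≤ I.card := Finset.card_image_le
  have hWeq : finrank ℝ W = I.card := by omega
  -- linear independence of X over I
  have hli : LinearIndependent ℝ (fun j : ↥I => X j) := by
    rw [linearIndependent_iff_card_eq_finrank_span]
    have hr : Set.range (fun j : ↥I => X j) = X '' ↑I := by
      ext x; simp
    rw [hr, Set.finrank, ← hW, hWeq]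
    simp
  -- Step 3: conclude
  rw [Submodule.eq_bot_iff]
  rintro v ⟨hvker, hvspan⟩
  have hsupp : ∀ j ∉ I, v j = 0 := by
    have hP : Submodule.span ℝ ((fun j => Pi.single j (1 : ℝ)) '' (I : Set (Fin d))) ≤
        Submodule.pi (↑(Iᶜ) : Set (Fin d)) (fun _ => (⊥ : Submodule ℝ ℝ)) := by
      rw [Submodule.span_le]
      rintro _ ⟨j, hj, rfl⟩
      rw [SetLike.mem_coe, Submodule.mem_pi]
      intro i hi
      simp only [Finset.coe_compl, Set.mem_compl_iff, Finset.mem_coe] at hi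
      have : i ≠ j := fun e => hi (e ▸ hj)
      simp [Pi.single_apply, this.symm]
    have := hP hvspan
    rw [Submodule.mem_pi] at this
    intro j hj
    simpa using this j (by simpa using hj)
  -- π v = ∑ j in I, v j • X j
  have hv_eq : v = ∑ j ∈ I, v j • (Pi.single j (1:ℝ) : Fin d → ℝ) := by
    have h0 : v = ∑ j : Fin d, v j • (Pi.single j (1:ℝ) : Fin d → ℝ) := by
      ext i
      simp [Finset.sum_apply, Pi.single_apply, Finset.sum_ite_eq]
    conv_lhs => rw [h0]
    exact (Finset.sum_subset (Finset.subset_univ I)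
      (fun j _ hj => by rw [hsupp j hj, zero_smul])).symm
  have hπv : ∑ j ∈ I, v j • X j = 0 := by
    have hπv0 : π v = 0 := hvker
    have h1 : π (∑ j ∈ I, v j • (Pi.single j (1:ℝ) : Fin d → ℝ)) = 0 := by
      rw [← hv_eq]; exact hπv0
    simpa [map_sum, map_smul, hπ] using h1
  have hz : ∀ j ∈ I, v j = 0 := by
    have := Fintype.linearIndependent_iff.1 hli (fun j : ↥I => v j)
    have hs : ∑ j : ↥I, v j • X j = ∑ j ∈ I, v j • X j := by
      rw [← Finset.sum_coe_sort I (fun j => v j • X j)]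
    intro j hj
    exact this (by rw [hs]; exact hπv) ⟨j, hj⟩
  ext j
  by_cases hj : j ∈ I
  · simpa using hz j hj
  · simpa using hsupp j hj
end

section
/- Let z ∈ ℂ^d_{F_I}, i.e. z_j = 0 exactly for j ∈ I. Then the image of the (real) Fréchet derivative of Ψ at z, a linear map from ℂ^d (as a real vector space) to 𝔫*, equals the annihilator in 𝔫* of the subspace 𝔫^{F_I} = 𝔫 ∩ span_ℝ{ e_j : j ∈ I }. -/
set_option synthInstance.maxHeartbeats 1000000
set_option maxHeartbeats 2000000

open ContinuousLinearMap in
/-- Let `z ∈ ℂ^d_{F_I}`, i.e. `z_j = 0` exactly for `j ∈ I`.  Then the image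
of the (real) Fréchet derivative of `Ψ` at `z` equals the annihilator in `𝔫*` of the
subspace `𝔫^{F_I} = 𝔫 ∩ span_ℝ{ e_j : j ∈ I }`, i.e. the set of functionals on `𝔫 = ker π`
vanishing on all `v ∈ 𝔫` with `v_j = 0` for `j ∉ I`.
(The dual `𝔫*` is realized as `↥(ker π) →L[ℝ] ℝ`.) -/
theorem range_fderiv_moment_map
    {𝔡 : Type*} [AddCommGroup 𝔡] [Module ℝ 𝔡] [FiniteDimensional ℝ 𝔡]
    {d : ℕ} (X : Fin d → 𝔡) (lam : Fin d → ℝ)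
    (π : (Fin d → ℝ) →ₗ[ℝ] 𝔡) (hπ : ∀ j, π (Pi.single j 1) = X j)
    (Ψ : (Fin d → ℂ) → (↥(LinearMap.ker π) →L[ℝ] ℝ))
    (hΨ : ∀ (z : Fin d → ℂ) (v : LinearMap.ker π),
      Ψ z v = ∑ j, (‖z j‖ ^ 2 + lam j) * (v : Fin d → ℝ) j)
    (I : Set (Fin d)) (z : Fin d → ℂ) (hz : ∀ j, z j = 0 ↔ j ∈ I) :
    Set.range ⇑(fderiv ℝ Ψ z) =
      {f : ↥(LinearMap.ker π) →L[ℝ] ℝ |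
        ∀ v : LinearMap.ker π, (∀ j ∉ I, (v : Fin d → ℝ) j = 0) → f v = 0} := by
  classical
  -- coordinate functionals on ker π
  let φ : Fin d → (↥(LinearMap.ker π) →L[ℝ] ℝ) := fun j =>
    (ContinuousLinearMap.proj j).comp (LinearMap.ker π).subtypeL
  have hφ : ∀ j (v : ↥(LinearMap.ker π)), φ j v = (v : Fin d → ℝ) j := fun j v => rfl
  -- B : ℝ^d →L (dual of N), c ↦ (v ↦ ∑ c j * v j)
  let Blin : (Fin d → ℝ) →ₗ[ℝ] (↥(LinearMap.ker π) →L[ℝ] ℝ) :=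
    { toFun := fun c => ∑ j, c j • φ j
      map_add' := by intro a b; simp [add_smul, Finset.sum_add_distrib]
      map_smul' := by intro m a; simp [smul_smul, Finset.smul_sum] }
  let B := LinearMap.toContinuousLinearMap (𝕜 := ℝ) (E := Fin d → ℝ)
    (F' := ↥(LinearMap.ker π) →L[ℝ] ℝ) Blin
  have hB : ∀ (c : Fin d → ℝ) (v : ↥(LinearMap.ker π)),
      B c v = ∑ j, c j * (v : Fin d → ℝ) j := by
    intro c v
    show (Blin c) v = _
    simp [Blin, ContinuousLinearMap.sum_apply, hφ, mul_comm]
  -- derivative of z ↦ (fun j => ‖z j‖^2 + lam j)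
  let L : Fin d → ((Fin d → ℂ) →L[ℝ] ℝ) := fun j => Complex.reCLM.comp (ContinuousLinearMap.proj j)
  let M : Fin d → ((Fin d → ℂ) →L[ℝ] ℝ) := fun j => Complex.imCLM.comp (ContinuousLinearMap.proj j)
  let D : (Fin d → ℂ) →L[ℝ] (Fin d → ℝ) :=
    ContinuousLinearMap.pi fun j =>
      (((z j).re • L j + (z j).re • L j) + ((z j).im • M j + (z j).im • M j))
  have hD : ∀ (w : Fin d → ℂ) j, D w j =
      2 * (z j).re * (w j).re + 2 * (z j).im * (w j).im := by
    intro w j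
    simp [D, L, M]
    ring
  let J : (Fin d → ℂ) → (Fin d → ℝ) := fun z' j => ‖z' j‖ ^ 2 + lam j
  have hJ : HasFDerivAt J D z := by
    rw [hasFDerivAt_pi']
    intro j
    have h1 : HasFDerivAt (fun z' : Fin d → ℂ => (z' j).re) (L j) z := (L j).hasFDerivAt
    have h2 : HasFDerivAt (fun z' : Fin d → ℂ => (z' j).im) (M j) z := (M j).hasFDerivAt
    have h3 := ((h1.mul h1).add (h2.mul h2)).add_const (lam j)
    convert h3 using 2 with z'
    simp [J, Complex.sq_norm, Complex.normSq_apply]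
    exact ContinuousLinearMap.proj_pi _ _
  have hΨJ : Ψ = fun z' => B (J z') := by
    funext z'
    ext v
    rw [hΨ, hB]
  have hΨ' : HasFDerivAt Ψ (B.comp D) z := by
    rw [hΨJ]
    have hBd := ContinuousLinearMap.hasFDerivAt (𝕜 := ℝ) (F := ↥(LinearMap.ker π) →L[ℝ] ℝ) (x := J z) B
    exact HasFDerivAt.comp (G := ↥(LinearMap.ker π) →L[ℝ] ℝ) (F := Fin d → ℝ) z hBd hJ
  rw [hΨ'.fderiv]
  ext f
  constructor
  · rintro ⟨w, rfl⟩ v hv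
    simp only [ContinuousLinearMap.comp_apply]
    rw [hB]
    refine Finset.sum_eq_zero fun j _ => ?_
    by_cases hj : j ∈ I
    · have : z j = 0 := (hz j).2 hj
      rw [hD]
      simp [this]
    · rw [hv j hj, mul_zero]
  · intro hf
    -- A : keep coordinates outside I
    let A : ↥(LinearMap.ker π) →ₗ[ℝ] (Fin d → ℝ) :=
      (LinearMap.pi fun j => if j ∈ I then 0 else LinearMap.proj j).comp
        (LinearMap.ker π).subtype
    have hA : ∀ (v : ↥(LinearMap.ker π)) j,
        A v j = if j ∈ I then 0 else (v : Fin d → ℝ) j := by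
      intro v j
      by_cases hj : j ∈ I <;> simp [A, hj]
    have hker : (f : ↥(LinearMap.ker π) →ₗ[ℝ] ℝ) ∈ (LinearMap.ker A).dualAnnihilator := by
      rw [Submodule.mem_dualAnnihilator]
      intro v hv
      refine hf v fun j hj => ?_
      have := congrFun (LinearMap.mem_ker.mp hv) j
      rwa [hA, if_neg hj] at this
    rw [← LinearMap.range_dualMap_eq_dualAnnihilator_ker] at hker
    obtain ⟨g, hg⟩ := hker
    -- g ∘ A = f (as linear maps)
    have hgA : ∀ v : ↥(LinearMap.ker π), g (A v) = f v := fun v =>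
      LinearMap.congr_fun hg v
    -- the preimage vector
    let w : Fin d → ℂ := fun j =>
      if j ∈ I then 0 else (g (Pi.single j 1) / (2 * ‖z j‖ ^ 2)) • (z j)
    refine ⟨w, ?_⟩
    ext v
    simp only [ContinuousLinearMap.comp_apply]
    rw [hB, ← hgA]
    rw [LinearMap.pi_apply_eq_sum_univ g (A v)]
    refine Finset.sum_congr rfl fun j _ => ?_
    have hsingle : (fun i => if j = i then (1:ℝ) else 0) = Pi.single j 1 := by
      funext i
      rw [Pi.single_apply]
      simp [eq_comm]
    rw [hsingle]
    by_cases hj : j ∈ I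
    · have hzj : z j = 0 := (hz j).2 hj
      rw [hD, hA, if_pos hj]
      simp [hzj]
    · have hzj : z j ≠ 0 := fun h => hj ((hz j).1 h)
      have hnorm : ‖z j‖ ^ 2 ≠ 0 := pow_ne_zero _ (norm_ne_zero_iff.mpr hzj)
      rw [hD, hA, if_neg hj]
      simp only [w, if_neg hj]
      have : 2 * (z j).re * ((g (Pi.single j 1) / (2 * ‖z j‖ ^ 2)) • z j).re +
          2 * (z j).im * ((g (Pi.single j 1) / (2 * ‖z j‖ ^ 2)) • z j).im
          = g (Pi.single j 1) * ((z j).re * (z j).re + (z j).im * (z j).im) / (‖z j‖ ^ 2) := by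
        simp only [Complex.real_smul, Complex.mul_re, Complex.mul_im, Complex.ofReal_re,
          Complex.ofReal_im]
        ring
      rw [this]
      have hnsq : (z j).re * (z j).re + (z j).im * (z j).im = ‖z j‖ ^ 2 := by
        rw [Complex.sq_norm, Complex.normSq_apply]
      rw [hnsq, mul_div_assoc, div_self hnorm, mul_one, smul_eq_mul]
      ring
end

section
/- Assume π is surjective and Δ is bounded. Let N be any subgroup of T^d = ℝ^d/ℤ^d, acting on ℂ^d by (t·z)_j = e^{2π i t_j} z_j, and let M = Ψ⁻¹(0)/N be the orbit space of the induced N-action on Ψ⁻¹(0), with the quotient topology and quotient map p : Ψ⁻¹(0) → M. Then M is compact, and there exists a continuous map Φ : M → 𝔡* with Φ(p(z)) = Φ̃(z) for all z ∈ Ψ⁻¹(0), where Φ̃(z) is the unique μ ∈ 𝔡* with |z_j|² = ⟨μ, X_j⟩ − λ_j for all j; moreover Φ(M) = Δ. -/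
/-- The integer lattice `ℤ^d ⊆ ℝ^d`, so that `T^d = ℝ^d/ℤ^d = (Fin d → ℝ) ⧸ intLattice d`. -/
def intLattice (d : ℕ) : AddSubgroup (Fin d → ℝ) :=
  AddSubgroup.pi Set.univ fun _ => AddSubgroup.zmultiples (1 : ℝ)

/-- Assume `π` is surjective and `Δ` is bounded.  Let `N` be any subgroup of
`T^d = ℝ^d/ℤ^d`, acting on `ℂ^d` by `(t·z)_j = e^{2πi t_j} z_j`, and let `M = Ψ⁻¹(0)/N` be
the orbit space (here `Quot r`, where `r` relates two points of `Ψ⁻¹(0)` iff one is obtained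
from the other by the action of an element of `N`), with quotient map `p = Quot.mk r`.
Then `M` is compact, and there is a continuous `Φ : M → 𝔡*` with `Φ(p z) = Φ̃(z)`, where
`Φ̃(z)` is the unique `μ` with `|z_j|² = ⟨μ, X_j⟩ − λ_j` for all `j`; moreover `Φ(M) = Δ`.
(The dual `𝔡*` is realized as `𝔡 →L[ℝ] ℝ`.) -/
theorem quotient_space_compact_moment_image
    {𝔡 : Type*} [NormedAddCommGroup 𝔡] [NormedSpace ℝ 𝔡] [FiniteDimensional ℝ 𝔡]
    {d : ℕ} (X : Fin d → 𝔡) (lam : Fin d → ℝ)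
    (π : (Fin d → ℝ) →ₗ[ℝ] 𝔡) (hπ : ∀ j, π (Pi.single j 1) = X j)
    (hsurj : Function.Surjective π)
    (hbd : Bornology.IsBounded {μ : 𝔡 →L[ℝ] ℝ | ∀ j, lam j ≤ μ (X j)})
    (N : AddSubgroup ((Fin d → ℝ) ⧸ intLattice d))
    (r : ZeroLevel lam π → ZeroLevel lam π → Prop)
    (hr : ∀ z w : ZeroLevel lam π, r z w ↔ ∃ t : Fin d → ℝ,
      (QuotientAddGroup.mk t : (Fin d → ℝ) ⧸ intLattice d) ∈ N ∧
      ∀ j, (w : Fin d → ℂ) j =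
        Complex.exp (2 * Real.pi * Complex.I * (t j : ℂ)) * (z : Fin d → ℂ) j) :
    CompactSpace (Quot r) ∧
    ∃ Φ : Quot r → (𝔡 →L[ℝ] ℝ),
      Continuous Φ ∧
      (∀ (z : ZeroLevel lam π) (μ : 𝔡 →L[ℝ] ℝ),
        (∀ j, ‖(z : Fin d → ℂ) j‖ ^ 2 = μ (X j) - lam j) → Φ (Quot.mk r z) = μ) ∧
      Set.range Φ = {μ : 𝔡 →L[ℝ] ℝ | ∀ j, lam j ≤ μ (X j)} := by

  classical
  obtain ⟨s, hs⟩ := π.exists_rightInverse_of_surjective (LinearMap.range_eq_top.mpr hsurj)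
  have hs' : ∀ x, π (s x) = x := fun x => by
    have h := LinearMap.congr_fun hs x
    simpa using h
  -- fact A : π v = ∑ j, v j • X j
  have factA : ∀ v : Fin d → ℝ, π v = ∑ j, v j • X j := by
    intro v
    have hv : v = ∑ j, Pi.single j (v j) := (Finset.univ_sum_single v).symm
    calc π v = π (∑ j, Pi.single j (v j)) := by rw [← hv]
      _ = ∑ j, π (Pi.single j (v j)) := map_sum π _ _
      _ = ∑ j, v j • X j := by
          refine Finset.sum_congr rfl fun j _ => ?_
          have : (Pi.single j (v j) : Fin d → ℝ) = v j • (Pi.single j 1 : Fin d → ℝ) := by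
            ext i
            by_cases hij : i = j <;> simp [Pi.single_apply, hij]
          rw [this, map_smul, hπ]
  -- the coefficient function
  set c : (Fin d → ℂ) → Fin d → ℝ := fun z j => ‖z j‖ ^ 2 + lam j with hc
  -- fact B : for z in the zero level, ∑ c z j * (s (π v)) j = ∑ c z j * v j
  have factB : ∀ z ∈ ZeroLevel lam π, ∀ v : Fin d → ℝ,
      ∑ j, c z j * s (π v) j = ∑ j, c z j * v j := by
    intro z hz v
    have hker : s (π v) - v ∈ LinearMap.ker π := by
      simp [LinearMap.mem_ker, map_sub, hs']
    have h0 := hz _ hker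
    have : ∑ j, (c z j * s (π v) j - c z j * v j) = 0 := by
      rw [← h0]
      refine Finset.sum_congr rfl fun j _ => ?_
      simp [hc, Pi.sub_apply, mul_sub]
    rw [Finset.sum_sub_distrib] at this
    linarith
  -- the moment map candidate
  set L : Fin d → (𝔡 →L[ℝ] ℝ) :=
    fun j => LinearMap.toContinuousLinearMap ((LinearMap.proj j).comp s) with hL
  set F : (Fin d → ℂ) → (𝔡 →L[ℝ] ℝ) := fun z => ∑ j, c z j • L j with hF
  have hFapp : ∀ z x, F z x = ∑ j, c z j * s x j := by
    intro z x
    simp [hF, hL, ContinuousLinearMap.sum_apply, ContinuousLinearMap.smul_apply,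
      LinearMap.coe_toContinuousLinearMap', smul_eq_mul]
  -- fact C : F z (X j) = c z j for z in the zero level
  have factC : ∀ z ∈ ZeroLevel lam π, ∀ j, F z (X j) = c z j := by
    intro z hz j
    rw [hFapp, ← hπ j, factB z hz]
    simp [Pi.single_apply, mul_ite, Finset.sum_ite_eq']
  -- fact D : functionals agreeing on all X j are equal
  have factD : ∀ μ ν : 𝔡 →L[ℝ] ℝ, (∀ j, μ (X j) = ν (X j)) → μ = ν := by
    intro μ ν h
    ext x
    obtain ⟨v, rfl⟩ := hsurj x
    rw [factA]
    simp [map_sum, map_smul, h]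
  -- F z is in Δ for z in the zero level
  have hFmem : ∀ z ∈ ZeroLevel lam π, ∀ j, lam j ≤ F z (X j) := by
    intro z hz j
    rw [factC z hz]
    have := sq_nonneg ‖z j‖
    simp only [hc]
    linarith
  -- boundedness of the zero level
  obtain ⟨C0, hC0⟩ := isBounded_iff_forall_norm_le.mp hbd
  set C : ℝ := max C0 0 with hCdef
  have hC : ∀ z ∈ ZeroLevel lam π, ‖F z‖ ≤ C := fun z hz =>
    le_trans (hC0 _ (hFmem z hz)) (le_max_left _ _)
  set B : ℝ := C * (∑ i, ‖X i‖) + ∑ i, |lam i| with hBdef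
  have hbound : ∀ z ∈ ZeroLevel lam π, ∀ j, ‖z j‖ ^ 2 ≤ B := by
    intro z hz j
    have h1 : ‖z j‖ ^ 2 + lam j = F z (X j) := (factC z hz j).symm
    have h2 : F z (X j) ≤ ‖F z‖ * ‖X j‖ := by
      calc F z (X j) ≤ |F z (X j)| := le_abs_self _
        _ = ‖F z (X j)‖ := rfl
        _ ≤ ‖F z‖ * ‖X j‖ := (F z).le_opNorm _
    have h3 : ‖F z‖ * ‖X j‖ ≤ C * ‖X j‖ :=
      mul_le_mul_of_nonneg_right (hC z hz) (norm_nonneg _)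
    have h4 : C * ‖X j‖ ≤ C * ∑ i, ‖X i‖ := by
      refine mul_le_mul_of_nonneg_left ?_ (le_max_right C0 0)
      exact Finset.single_le_sum (fun i _ => norm_nonneg (X i)) (Finset.mem_univ j)
    have h5 : -lam j ≤ ∑ i, |lam i| := by
      have := Finset.single_le_sum (fun i (_ : i ∈ Finset.univ) => abs_nonneg (lam i))
        (Finset.mem_univ j)
      have := neg_abs_le (lam j)
      linarith [Finset.single_le_sum (fun i (_ : i ∈ Finset.univ) => abs_nonneg (lam i))
        (Finset.mem_univ j)]
    linarith
  have hBnn : 0 ≤ B := by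
    have h0 : (0:ℝ) ≤ C * ∑ i, ‖X i‖ :=
      mul_nonneg (le_max_right C0 0)
        (Finset.sum_nonneg fun i _ => norm_nonneg (X i))
    have h1 : (0:ℝ) ≤ ∑ i, |lam i| := Finset.sum_nonneg fun i _ => abs_nonneg (lam i)
    simp only [hBdef]
    linarith
  have hZbd : Bornology.IsBounded (ZeroLevel lam π) := by
    rw [isBounded_iff_forall_norm_le]
    refine ⟨Real.sqrt B, fun z hz => ?_⟩
    rw [pi_norm_le_iff_of_nonneg (Real.sqrt_nonneg B)]
    intro j
    rw [show ‖z j‖ = Real.sqrt (‖z j‖ ^ 2) from (Real.sqrt_sq (norm_nonneg _)).symm]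
    exact Real.sqrt_le_sqrt (hbound z hz j)
  have hZcl : IsClosed (ZeroLevel lam π) := by
    have : ZeroLevel lam π =
        ⋂ v ∈ LinearMap.ker π, {z : Fin d → ℂ | ∑ j, (‖z j‖ ^ 2 + lam j) * v j = 0} := by
      ext z
      simp [ZeroLevel, Set.mem_iInter]
    rw [this]
    refine isClosed_biInter fun v _ => isClosed_eq ?_ continuous_const
    exact continuous_finset_sum _ fun j _ =>
      ((((continuous_apply j).norm.pow 2).add continuous_const).mul continuous_const)
  have hZcpt : IsCompact (ZeroLevel lam π) :=
    Metric.isCompact_of_isClosed_isBounded hZcl hZbd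
  haveI : CompactSpace (ZeroLevel lam π) := isCompact_iff_compactSpace.mp hZcpt
  constructor
  · refine ⟨?_⟩
    rw [← Set.range_eq_univ.mpr (Quot.mk_surjective (r := r))]
    exact isCompact_range continuous_quot_mk
  · -- invariance of F under r
    have hinv : ∀ z w : ZeroLevel lam π, r z w → F (z : Fin d → ℂ) = F (w : Fin d → ℂ) := by
      intro z w hzw
      obtain ⟨t, -, hw⟩ := (hr z w).mp hzw
      have hn : ∀ j, ‖(w : Fin d → ℂ) j‖ = ‖(z : Fin d → ℂ) j‖ := by
        intro j
        rw [hw j, norm_mul]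
        have harg : (2 * (Real.pi : ℂ) * Complex.I * (t j : ℂ)) =
            ((2 * Real.pi * t j : ℝ) : ℂ) * Complex.I := by push_cast; ring
        rw [harg, Complex.norm_exp_ofReal_mul_I, one_mul]
      have : c (w : Fin d → ℂ) = c (z : Fin d → ℂ) := by
        funext j; simp only [hc]; rw [hn j]
      simp [hF, this]
    refine ⟨Quot.lift (fun z => F (z : Fin d → ℂ)) hinv, ?_, ?_, ?_⟩
    · refine continuous_quot_lift _ ?_
      refine continuous_finset_sum _ fun j _ => Continuous.smul (f := fun z : ZeroLevel lam π => c (↑z) j) (g := fun _ => L j) ?_ continuous_const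
      exact ((((continuous_apply j).comp continuous_subtype_val).norm.pow 2).add
        continuous_const)
    · intro z μ hμ
      refine factD _ _ fun j => ?_
      have h1 : F (z : Fin d → ℂ) (X j) = c (z : Fin d → ℂ) j := factC _ z.2 j
      have h2 : c (z : Fin d → ℂ) j = μ (X j) := by
        simp only [hc]
        rw [hμ j]; ring
      rw [show (Quot.lift (fun z : ZeroLevel lam π => F (z : Fin d → ℂ)) hinv)
          (Quot.mk r z) = F (z : Fin d → ℂ) from rfl, h1, h2]
    · ext μ
      simp only [Set.mem_range, Set.mem_setOf_eq]
      constructor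
      · rintro ⟨q, rfl⟩
        obtain ⟨z, rfl⟩ := Quot.exists_rep q
        exact hFmem _ z.2
      · intro hμ
        set z0 : Fin d → ℂ := fun j => ((Real.sqrt (μ (X j) - lam j) : ℝ) : ℂ) with hz0
        have hnorm : ∀ j, ‖z0 j‖ ^ 2 = μ (X j) - lam j := by
          intro j
          rw [hz0]
          simp only
          rw [Complex.norm_real, Real.norm_eq_abs,
            abs_of_nonneg (Real.sqrt_nonneg _), Real.sq_sqrt (by linarith [hμ j])]
        have hz0mem : z0 ∈ ZeroLevel lam π := by
          intro v hv
          have hsum : ∑ j, (‖z0 j‖ ^ 2 + lam j) * v j = ∑ j, μ (X j) * v j := by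
            refine Finset.sum_congr rfl fun j _ => ?_
            rw [hnorm j]; ring_nf
          rw [hsum]
          have hv0 : π v = 0 := hv
          have : μ (π v) = ∑ j, μ (X j) * v j := by
            rw [factA]
            simp [map_sum, map_smul, mul_comm]
          rw [← this, hv0, map_zero]
        refine ⟨Quot.mk r ⟨z0, hz0mem⟩, ?_⟩
        refine factD _ _ fun j => ?_
        have h1 : F z0 (X j) = c z0 j := factC _ hz0mem j
        simp only [hc] at h1
        rw [show (Quot.lift (fun z : ZeroLevel lam π => F (z : Fin d → ℂ)) hinv)
            (Quot.mk r ⟨z0, hz0mem⟩) = F z0 from rfl, h1, hnorm j]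
        ring
end
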